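/- arXiv:1703.08782 — 5 statements merged into one kernel-verified Lean document; each statement's English description precedes it below -/
import Mathlib

section
/- Let k be a field, n ≥ 2, and let λ₁,…,λₙ be pairwise distinct nonzero elements of k. Define linear maps α, β, γ : k^n → k^n by α(e(i)) = e(i), β(e(i)) = λᵢ e(i), and γ(e(i)) = e(i+1) with indices mod n (e(n+1) = e(1)). Then the only linear maps f : k^n → k^n satisfying f∘α = α∘f, f∘β = β∘f, and f∘γ = γ∘f are the scalar multiples of the identity. -/
/- X(λ₁,…,λₙ) is a brick: every endomorphism of the 3-Kronecker representation
   (k^n, k^n; id, diag(λᵢ), cyclic shift) is a scalar multiple of the identity. -/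

/-- The diagonal map β with β(e i) = λᵢ e i. -/
def kroneckerBeta (k : Type) [Field k] (n : ℕ) (l : Fin n → k) :
    (Fin n → k) →ₗ[k] (Fin n → k) where
  toFun v i := l i * v i
  map_add' u v := by funext i; simp [mul_add]
  map_smul' c v := by funext i; simp; ring

/-- The cyclic shift map γ with γ(e i) = e (i+1) (indices mod n). -/
def kroneckerGamma (k : Type) [Field k] (n : ℕ) :
    (Fin n → k) →ₗ[k] (Fin n → k) where
  toFun v i := v ((finRotate n).symm i)
  map_add' u v := rfl
  map_smul' c v := rfl

/-! The standard basis vectors are eigenvectors of β with pairwise distinct eigenvalues, so `f` is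
diagonal in the standard basis; commuting with the cyclic shift γ makes the matrix of `f` circulant,
so its diagonal is constant. -/

open Function

lemma Fin.apply_eq_apply_of_comp_finRotate_eq {α : Type*} {n : ℕ} {d : Fin n → α}
    (h : d ∘ finRotate n = d) (i j : Fin n) : d i = d j := by
  cases n with
  | zero => exact i.elim0
  | succ m =>
    suffices hconst : ∀ i, d i = d 0 by rw [hconst i, hconst j]
    intro i
    induction i using Fin.induction with
    | zero => rfl
    | succ i ih => rw [← ih, ← congrFun h i.castSucc]; simp

lemma LinearMap.eq_smul_id_of_apply_single {R ι : Type*} [CommSemiring R] [Finite ι]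
    [DecidableEq ι] {f : (ι → R) →ₗ[R] (ι → R)} {c : R}
    (h : ∀ j, f (Pi.single j 1) = c • Pi.single j 1) : f = c • LinearMap.id :=
  (Pi.basisFun R ι).ext fun j => by simpa using h j

section Kronecker

variable {k : Type} [Field k] {n : ℕ}

lemma kroneckerBeta_single (l : Fin n → k) (j : Fin n) :
    kroneckerBeta k n l (Pi.single j 1) = l j • Pi.single j 1 := by
  ext i
  by_cases h : i = j <;> simp [kroneckerBeta, h]

lemma kroneckerGamma_single (j : Fin n) :
    kroneckerGamma k n (Pi.single j 1) = Pi.single (finRotate n j) 1 :=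
  Pi.single_comp_equiv (finRotate n).symm j 1

lemma apply_single_eq_smul_single_of_comp_kroneckerBeta {l : Fin n → k} (hl : Injective l)
    {f : (Fin n → k) →ₗ[k] (Fin n → k)}
    (hβ : f.comp (kroneckerBeta k n l) = (kroneckerBeta k n l).comp f) (j : Fin n) :
    f (Pi.single j 1) = f (Pi.single j 1) j • Pi.single j 1 := by
  ext i
  by_cases hij : i = j
  · subst hij; simp
  · have heigen := congrFun (LinearMap.congr_fun hβ (Pi.single j 1)) i
    rw [LinearMap.comp_apply, LinearMap.comp_apply, kroneckerBeta_single, map_smul] at heigen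
    change l j * f (Pi.single j 1) i = l i * f (Pi.single j 1) i at heigen
    have hl' : l j - l i ≠ 0 := sub_ne_zero.mpr fun h => hij (hl h).symm
    have hzero : f (Pi.single j 1) i = 0 :=
      (mul_eq_zero.mp (by linear_combination heigen)).resolve_left hl'
    simp [hij, hzero]

lemma apply_single_finRotate_of_comp_kroneckerGamma {f : (Fin n → k) →ₗ[k] (Fin n → k)}
    (hγ : f.comp (kroneckerGamma k n) = (kroneckerGamma k n).comp f) (i j : Fin n) :
    f (Pi.single (finRotate n j) 1) (finRotate n i) = f (Pi.single j 1) i := by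
  have h := congrFun (LinearMap.congr_fun hγ (Pi.single j 1)) (finRotate n i)
  rw [LinearMap.comp_apply, LinearMap.comp_apply, kroneckerGamma_single] at h
  simpa only [kroneckerGamma, LinearMap.coe_mk, AddHom.coe_mk, Equiv.symm_apply_apply] using h

end Kronecker

theorem stmt0_general (k : Type) [Field k] (n : ℕ) (l : Fin n → k)
    (hinj : Function.Injective l)
    (f : (Fin n → k) →ₗ[k] (Fin n → k))
    (hβ : f.comp (kroneckerBeta k n l) = (kroneckerBeta k n l).comp f)
    (hγ : f.comp (kroneckerGamma k n) = (kroneckerGamma k n).comp f) :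
    ∃ c : k, f = c • LinearMap.id := by
  set d : Fin n → k := fun j => f (Pi.single j 1) j
  have hdiag := apply_single_eq_smul_single_of_comp_kroneckerBeta hinj hβ
  have hd : d ∘ finRotate n = d :=
    funext fun j => apply_single_finRotate_of_comp_kroneckerGamma hγ j j
  rcases isEmpty_or_nonempty (Fin n) with _ | ⟨⟨j₀⟩⟩
  · exact ⟨0, Subsingleton.elim _ _⟩
  · refine ⟨d j₀, LinearMap.eq_smul_id_of_apply_single fun j => ?_⟩
    rw [hdiag j, ← Fin.apply_eq_apply_of_comp_finRotate_eq hd j j₀]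

theorem stmt0 (k : Type) [Field k] (n : ℕ) (hn : 2 ≤ n) (l : Fin n → k)
    (hne : ∀ i, l i ≠ 0) (hinj : Function.Injective l)
    (f : (Fin n → k) →ₗ[k] (Fin n → k))
    (hα : f.comp LinearMap.id = LinearMap.comp LinearMap.id f)
    (hβ : f.comp (kroneckerBeta k n l) = (kroneckerBeta k n l).comp f)
    (hγ : f.comp (kroneckerGamma k n) = (kroneckerGamma k n).comp f) :
    ∃ c : k, f = c • LinearMap.id :=
  stmt0_general k n l hinj f hβ hγ
end

section
/- Let k be a field, n ≥ 2, and λ₁,…,λₙ pairwise distinct nonzero elements of k. Let X = (k^n, k^n; α, β, γ) with α = id, β(e(i)) = λᵢe(i), γ(e(i)) = e(i+1) (cyclically), and let Y = (k, k; 1, 0, 0), both representations of the 3-Kronecker quiver (two vertices, three arrows 1 → 2). Then Hom(X, Y) = 0 and Hom(Y, X) = 0. -/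
theorem stmt1 (k : Type) [Field k] (n : ℕ) (hn : 2 ≤ n) (l : Fin n → k)
    (hne : ∀ i, l i ≠ 0) (hinj : Function.Injective l) :
    -- Hom(X, Y) = 0 : a morphism (f₁, f₂) satisfies f₂∘α_X = α_Y∘f₁, f₂∘β_X = β_Y∘f₁ = 0,
    -- f₂∘γ_X = γ_Y∘f₁ = 0
    (∀ f₁ f₂ : (Fin n → k) →ₗ[k] k,
      f₂.comp (LinearMap.id : (Fin n → k) →ₗ[k] (Fin n → k)) =
        (LinearMap.id : k →ₗ[k] k).comp f₁ →
      f₂.comp (kroneckerBeta k n l) = 0 →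
      f₂.comp (kroneckerGamma k n) = 0 →
      f₁ = 0 ∧ f₂ = 0) ∧
    -- Hom(Y, X) = 0 : a morphism (g₁, g₂) satisfies g₂∘α_Y = α_X∘g₁, g₂∘β_Y = β_X∘g₁,
    -- g₂∘γ_Y = γ_X∘g₁, where β_Y = γ_Y = 0
    (∀ g₁ g₂ : k →ₗ[k] (Fin n → k),
      g₂.comp (LinearMap.id : k →ₗ[k] k) =
        (LinearMap.id : (Fin n → k) →ₗ[k] (Fin n → k)).comp g₁ →
      (kroneckerBeta k n l).comp g₁ = 0 →
      (kroneckerGamma k n).comp g₁ = 0 →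
      g₁ = 0 ∧ g₂ = 0) := by
  constructor
  · intro f₁ f₂ hα hβ _
    have hf₂ : f₂ = 0 := by
      apply LinearMap.ext; intro v
      have := congrArg (fun g => g (fun i => (l i)⁻¹ * v i)) hβ
      simp only [LinearMap.comp_apply, LinearMap.zero_apply] at this
      have hv : (kroneckerBeta k n l) (fun i => (l i)⁻¹ * v i) = v := by
        funext i
        simp [kroneckerBeta, mul_inv_cancel_left₀ (hne i)]
      rwa [hv] at this
    have hf₁ : f₁ = 0 := by
      have : LinearMap.id.comp f₁ = f₂.comp LinearMap.id := hα.symm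
      rw [hf₂] at this
      simpa using this
    exact ⟨hf₁, hf₂⟩
  · intro g₁ g₂ hα hβ _
    have hg₁ : g₁ = 0 := by
      apply LinearMap.ext; intro c; funext i
      have := congrArg (fun g => g c i) hβ
      simp only [LinearMap.comp_apply, LinearMap.zero_apply] at this
      have : l i * g₁ c i = 0 := this
      exact (mul_eq_zero.mp this).resolve_left (hne i)
    have hg₂ : g₂ = 0 := by
      rw [LinearMap.comp_id, hg₁] at hα
      simpa using hα
    exact ⟨hg₁, hg₂⟩
end

section
/- Let k be a field, n ≥ 2, λ₁,…,λₙ pairwise distinct nonzero elements of k, and X the 3-Kronecker representation (k^n, k^n; id, diag(λᵢ), cyclic shift). Let a be a natural number and let W be a subrepresentation of X^a whose dimension vector equals (w, w) for some w. Then W is isomorphic as a representation to X^s for some natural number s, and w = s·n. -/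
/-- The structure map of X^a induced componentwise by a map of X. -/
def powMap (k : Type) [Field k] (n : ℕ) (a : ℕ) (f : (Fin n → k) →ₗ[k] (Fin n → k)) :
    (Fin a → Fin n → k) →ₗ[k] (Fin a → Fin n → k) :=
  LinearMap.pi fun j => f.comp (LinearMap.proj j)

/-
Since `W₁ ≤ W₂` have the same dimension they coincide, so `W := W₁` is stable under `β` and `γ`.
View vectors of `X^a` as `a × n` matrices. As the `λᵢ` are distinct, Lagrange interpolation in `β`
projects `W` onto each column, so `W` consists of the matrices whose `i`-th column lies in the
slice `Uᵢ = {y | y placed as column i lies in W}`. The cyclic shift `γ` gives `Uᵢ ≤ Uᵢ₊₁`, hence all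
slices equal one subspace `U`. A basis of `U` then yields an isomorphism `X^(dim U) ≅ W` acting on
rows, which commutes with `β` and `γ` because those act on columns.
-/

namespace Kronecker3

variable {k : Type} [Field k] {n a s : ℕ}

def column (i : Fin n) : (Fin a → Fin n → k) →ₗ[k] (Fin a → k) :=
  (LinearMap.proj i).compLeft (Fin a)

def singleColumn (i : Fin n) : (Fin a → k) →ₗ[k] (Fin a → Fin n → k) :=
  (LinearMap.single k (fun _ => k) i).compLeft (Fin a)

def columnSlice (W : Submodule k (Fin a → Fin n → k)) (i : Fin n) : Submodule k (Fin a → k) :=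
  W.comap (singleColumn i)

def columnwise (n : ℕ) (U : Submodule k (Fin a → k)) : Submodule k (Fin a → Fin n → k) :=
  ⨅ i : Fin n, U.comap (column i)

def mapColumns (n : ℕ) (B : (Fin s → k) →ₗ[k] (Fin a → k)) :
    (Fin s → Fin n → k) →ₗ[k] (Fin a → Fin n → k) where
  toFun c r i := B (fun j => c j i) r
  map_add' c d := by
    funext r i
    exact congrFun (B.map_add (fun j => c j i) (fun j => d j i)) r
  map_smul' t c := by
    funext r i
    exact congrFun (B.map_smul t (fun j => c j i)) r

@[simp] lemma column_apply (i : Fin n) (x : Fin a → Fin n → k) (r : Fin a) :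
    column i x r = x r i := rfl

@[simp] lemma singleColumn_apply (i : Fin n) (y : Fin a → k) (r : Fin a) (c : Fin n) :
    singleColumn i y r c = Pi.single (M := fun _ => k) i (y r) c := rfl

lemma powMap_apply (f : (Fin n → k) →ₗ[k] (Fin n → k)) (x : Fin a → Fin n → k) (r : Fin a) :
    powMap k n a f x r = f (x r) := rfl

lemma sum_singleColumn_column (x : Fin a → Fin n → k) :
    ∑ i, singleColumn i (column i x) = x := by
  funext r c
  simp [Finset.sum_apply, Pi.single_apply]

lemma mem_columnwise {U : Submodule k (Fin a → k)} {x : Fin a → Fin n → k} :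
    x ∈ columnwise n U ↔ ∀ i, column i x ∈ U := by
  simp [columnwise]

lemma powMap_kroneckerBeta_apply (g : Fin n → k) (x : Fin a → Fin n → k) (r : Fin a) (c : Fin n) :
    powMap k n a (kroneckerBeta k n g) x r c = g c * x r c := rfl

lemma powMap_kroneckerGamma_singleColumn (i : Fin n) (y : Fin a → k) :
    powMap k n a (kroneckerGamma k n) (singleColumn i y) = singleColumn (finRotate n i) y := by
  funext r c
  simp only [powMap_apply, kroneckerGamma, LinearMap.coe_mk, AddHom.coe_mk, singleColumn_apply,
    Pi.single_apply, Equiv.symm_apply_eq]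

lemma mapColumns_injective {B : (Fin s → k) →ₗ[k] (Fin a → k)} (hB : Function.Injective B) :
    Function.Injective (mapColumns n B) := by
  intro c d h
  funext j i
  exact congrFun (hB (funext fun r => congrFun (congrFun h r) i)) j

lemma range_mapColumns (B : (Fin s → k) →ₗ[k] (Fin a → k)) :
    LinearMap.range (mapColumns n B) = columnwise n (LinearMap.range B) := by
  ext x
  simp only [LinearMap.mem_range, mem_columnwise]
  constructor
  · rintro ⟨c, rfl⟩ i
    exact ⟨fun j => c j i, rfl⟩
  · intro h
    choose d hd using h
    exact ⟨fun j i => d i j, funext fun r => funext fun i => congrFun (hd i) r⟩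

lemma mapColumns_powMap_kroneckerBeta (B : (Fin s → k) →ₗ[k] (Fin a → k)) (g : Fin n → k)
    (c : Fin s → Fin n → k) :
    mapColumns n B (powMap k n s (kroneckerBeta k n g) c) =
      powMap k n a (kroneckerBeta k n g) (mapColumns n B c) := by
  funext r i
  exact congrFun (B.map_smul (g i) (fun j => c j i)) r

lemma mapColumns_powMap_kroneckerGamma (B : (Fin s → k) →ₗ[k] (Fin a → k))
    (c : Fin s → Fin n → k) :
    mapColumns n B (powMap k n s (kroneckerGamma k n) c) =
      powMap k n a (kroneckerGamma k n) (mapColumns n B c) := rfl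

section Invariant

variable {W : Submodule k (Fin a → Fin n → k)}

lemma powMap_kroneckerBeta_prod_sub_mem {l : Fin n → k}
    (hW : ∀ x ∈ W, powMap k n a (kroneckerBeta k n l) x ∈ W) (S : Finset (Fin n))
    {x : Fin a → Fin n → k} (hx : x ∈ W) :
    powMap k n a (kroneckerBeta k n fun c => ∏ t ∈ S, (l c - l t)) x ∈ W := by
  classical
  induction S using Finset.induction_on with
  | empty =>
    convert hx
    funext r c
    exact one_mul _
  | insert t S ht ih =>
    set y := powMap k n a (kroneckerBeta k n fun c => ∏ t ∈ S, (l c - l t)) x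
    have hy : powMap k n a (kroneckerBeta k n fun c => ∏ u ∈ insert t S, (l c - l u)) x =
        powMap k n a (kroneckerBeta k n l) y - l t • y := by
      funext r c
      simp only [y, powMap_kroneckerBeta_apply, Finset.prod_insert ht, Pi.sub_apply,
        Pi.smul_apply, smul_eq_mul]
      ring
    rw [hy]
    exact W.sub_mem (hW y ih) (W.smul_mem _ ih)

lemma singleColumn_column_mem {l : Fin n → k} (hinj : Function.Injective l)
    (hW : ∀ x ∈ W, powMap k n a (kroneckerBeta k n l) x ∈ W) (i : Fin n)
    {x : Fin a → Fin n → k} (hx : x ∈ W) : singleColumn i (column i x) ∈ W := by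
  classical
  set P := ∏ t ∈ Finset.univ.erase i, (l i - l t)
  have hP : P ≠ 0 := Finset.prod_ne_zero_iff.2 fun t ht =>
    sub_ne_zero.2 fun h => Finset.ne_of_mem_erase ht (hinj h).symm
  have hx' : singleColumn i (column i x) =
      P⁻¹ • powMap k n a (kroneckerBeta k n fun c => ∏ t ∈ Finset.univ.erase i, (l c - l t)) x := by
    funext r c
    by_cases hc : c = i
    · subst hc
      simp [powMap_kroneckerBeta_apply, P, hP]
    · have hzero : ∏ t ∈ Finset.univ.erase i, (l c - l t) = 0 :=
        Finset.prod_eq_zero (Finset.mem_erase.2 ⟨hc, Finset.mem_univ c⟩) (sub_self (l c))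
      simp [powMap_kroneckerBeta_apply, hc, hzero]
  rw [hx']
  exact W.smul_mem _ (powMap_kroneckerBeta_prod_sub_mem hW _ hx)

lemma columnSlice_le_columnSlice_finRotate
    (hW : ∀ x ∈ W, powMap k n a (kroneckerGamma k n) x ∈ W) (i : Fin n) :
    columnSlice W i ≤ columnSlice W (finRotate n i) := fun y hy => by
  simpa [columnSlice, powMap_kroneckerGamma_singleColumn] using hW _ hy

lemma columnSlice_eq (hn : 2 ≤ n) (hW : ∀ x ∈ W, powMap k n a (kroneckerGamma k n) x ∈ W)
    (i j : Fin n) : columnSlice W i = columnSlice W j := by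
  suffices h : ∀ i j, columnSlice W i ≤ columnSlice W j from le_antisymm (h i j) (h j i)
  intro i j
  have hmoved : ∀ m, finRotate n m ≠ m := fun m =>
    Equiv.Perm.mem_support.1 (by simp [support_finRotate_of_le hn])
  obtain ⟨t, rfl⟩ := (isCycle_finRotate_of_le hn).exists_pow_eq (hmoved i) (hmoved j)
  induction t with
  | zero => exact le_rfl
  | succ t ih =>
    rw [pow_succ', Equiv.Perm.mul_apply]
    exact ih.trans (columnSlice_le_columnSlice_finRotate hW _)

lemma eq_columnwise_columnSlice (hn : 2 ≤ n) {l : Fin n → k} (hinj : Function.Injective l)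
    (hβ : ∀ x ∈ W, powMap k n a (kroneckerBeta k n l) x ∈ W)
    (hγ : ∀ x ∈ W, powMap k n a (kroneckerGamma k n) x ∈ W) (i : Fin n) :
    W = columnwise n (columnSlice W i) := by
  ext x
  rw [mem_columnwise]
  constructor
  · intro hx j
    rw [columnSlice_eq hn hγ i j]
    exact singleColumn_column_mem hinj hβ j hx
  · intro h
    rw [← sum_singleColumn_column x]
    refine W.sum_mem fun j _ => ?_
    have hj := h j
    rwa [columnSlice_eq hn hγ i j] at hj

end Invariant

lemma symm_mk_apply_eq_of_intertwines {R M V : Type*} [Semiring R] [AddCommMonoid M]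
    [Module R M] [AddCommMonoid V] [Module R V] {W : Submodule R V} (e : M ≃ₗ[R] W)
    {f : V →ₗ[R] V} {g : M →ₗ[R] M} (hfg : ∀ c, f (e c) = e (g c)) (x : W) (hx : f x ∈ W) :
    e.symm ⟨f x, hx⟩ = g (e.symm x) := by
  rw [LinearEquiv.symm_apply_eq]
  ext
  rw [← hfg, LinearEquiv.apply_symm_apply]

end Kronecker3

open Kronecker3 in
theorem stmt2_general (k : Type) [Field k] (n : ℕ) (hn : 2 ≤ n) (l : Fin n → k)
    (hinj : Function.Injective l)
    (a : ℕ) (W₁ W₂ : Submodule k (Fin a → Fin n → k)) (w : ℕ)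
    (hα : ∀ x ∈ W₁, x ∈ W₂)
    (hβ : ∀ x ∈ W₁, powMap k n a (kroneckerBeta k n l) x ∈ W₂)
    (hγ : ∀ x ∈ W₁, powMap k n a (kroneckerGamma k n) x ∈ W₂)
    (hd1 : Module.finrank k W₁ = w) (hd2 : Module.finrank k W₂ = w) :
    ∃ s : ℕ, w = s * n ∧
      ∃ (e₁ : W₁ ≃ₗ[k] (Fin s → Fin n → k)) (e₂ : W₂ ≃ₗ[k] (Fin s → Fin n → k)),
        ∀ x : W₁,
          e₂ ⟨x.1, hα x.1 x.2⟩ = e₁ x ∧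
          e₂ ⟨powMap k n a (kroneckerBeta k n l) x.1, hβ x.1 x.2⟩ =
            powMap k n s (kroneckerBeta k n l) (e₁ x) ∧
          e₂ ⟨powMap k n a (kroneckerGamma k n) x.1, hγ x.1 x.2⟩ =
            powMap k n s (kroneckerGamma k n) (e₁ x) := by
  obtain rfl : W₁ = W₂ := Submodule.eq_of_le_of_finrank_le hα (by rw [hd1, hd2])
  set U := columnSlice W₁ ⟨0, by omega⟩
  have hW : W₁ = columnwise n U := eq_columnwise_columnSlice hn hinj hβ hγ _
  let B : (Fin (Module.finrank k U) → k) →ₗ[k] (Fin a → k) :=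
    U.subtype ∘ₗ (Module.finBasis k U).equivFun.symm.toLinearMap
  have hB : Function.Injective B := U.injective_subtype.comp (LinearEquiv.injective _)
  have hBU : LinearMap.range B = U := by
    rw [LinearMap.range_comp, LinearEquiv.range, Submodule.map_top, Submodule.range_subtype]
  let e := (LinearEquiv.ofInjective _ (mapColumns_injective (n := n) hB)).trans
    (LinearEquiv.ofEq _ _ (by rw [range_mapColumns, hBU, ← hW]))
  refine ⟨Module.finrank k U, ?_, e.symm, e.symm, fun x => ⟨rfl, ?_, ?_⟩⟩
  · rw [← hd1, e.symm.finrank_eq, Module.finrank_pi_fintype]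
    simp
  · exact symm_mk_apply_eq_of_intertwines e
      (fun c => (mapColumns_powMap_kroneckerBeta B l c).symm) x _
  · exact symm_mk_apply_eq_of_intertwines e
      (fun c => (mapColumns_powMap_kroneckerGamma B c).symm) x _

theorem stmt2 (k : Type) [Field k] (n : ℕ) (hn : 2 ≤ n) (l : Fin n → k)
    (hne : ∀ i, l i ≠ 0) (hinj : Function.Injective l)
    (a : ℕ) (W₁ W₂ : Submodule k (Fin a → Fin n → k)) (w : ℕ)
    (hα : ∀ x ∈ W₁, x ∈ W₂)
    (hβ : ∀ x ∈ W₁, powMap k n a (kroneckerBeta k n l) x ∈ W₂)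
    (hγ : ∀ x ∈ W₁, powMap k n a (kroneckerGamma k n) x ∈ W₂)
    (hd1 : Module.finrank k W₁ = w) (hd2 : Module.finrank k W₂ = w) :
    ∃ s : ℕ, w = s * n ∧
      ∃ (e₁ : W₁ ≃ₗ[k] (Fin s → Fin n → k)) (e₂ : W₂ ≃ₗ[k] (Fin s → Fin n → k)),
        ∀ x : W₁,
          e₂ ⟨x.1, hα x.1 x.2⟩ = e₁ x ∧
          e₂ ⟨powMap k n a (kroneckerBeta k n l) x.1, hβ x.1 x.2⟩ =
            powMap k n s (kroneckerBeta k n l) (e₁ x) ∧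
          e₂ ⟨powMap k n a (kroneckerGamma k n) x.1, hγ x.1 x.2⟩ =
            powMap k n s (kroneckerGamma k n) (e₁ x) :=
  stmt2_general k n hn l hinj a W₁ W₂ w hα hβ hγ hd1 hd2
end

section
/- Let k be a field, n ≥ 2, λ₁,…,λₙ pairwise distinct nonzero elements of k, and X the 3-Kronecker representation (k^n, k^n; id, diag(λᵢ), cyclic shift γ). If W ≤ X (as a subrepresentation) has dimension vector (w, w) then W = 0 or W = X. -/
/-!
Since `α = id`, we have `W₁ ≤ W₂`, and equal dimensions force `W₁ = W₂ =: W`, a subspace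
stable under `β` and `γ`. As `β` is diagonal with distinct eigenvalues, a `β`-stable subspace
containing `x` contains every basis vector `eᵢ` with `xᵢ ≠ 0`: multiplying by `β - λⱼ` kills the
`j`-th coordinate and keeps the others up to nonzero scalars. Since `γ` permutes the basis vectors
along a single `n`-cycle, a nonzero `W` then contains all of them.
-/

open Equiv

namespace Submodule

variable {k ι : Type*} [DecidableEq ι]

lemma single_mem_of_mul_mem [Field k] [Finite ι] {l : ι → k} (hl : Function.Injective l)
    {W : Submodule k (ι → k)} (hW : ∀ x ∈ W, l * x ∈ W) {x : ι → k} (hx : x ∈ W) {i : ι}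
    (hi : x i ≠ 0) : Pi.single i 1 ∈ W := by
  induction hs : (Function.support x).ncard using Nat.strong_induction_on generalizing x with
  | _ s ih =>
    by_cases h : ∃ j, x j ≠ 0 ∧ j ≠ i
    · obtain ⟨j, hj, hji⟩ := h
      have hy : l * x - l j • x ∈ W := W.sub_mem (hW x hx) (W.smul_mem _ hx)
      have hy_apply (m : ι) : (l * x - l j • x) m = (l m - l j) * x m := by
        simp only [Pi.sub_apply, Pi.mul_apply, Pi.smul_apply, smul_eq_mul]; ring
      refine ih _ ?_ hy ?_ rfl
      · subst hs
        refine Set.ncard_lt_ncard ⟨fun m hm => ?_, fun hsub => hsub hj ?_⟩ (Set.toFinite _)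
        · rw [Function.mem_support, hy_apply] at hm
          exact right_ne_zero_of_mul hm
        · simp [hy_apply]
      · rw [hy_apply]
        exact mul_ne_zero (sub_ne_zero.2 fun he => hji (hl he).symm) hi
    · push Not at h
      have hsingle : Pi.single i 1 = (x i)⁻¹ • x := by
        funext j
        by_cases hji : j = i
        · subst hji; simp [inv_mul_cancel₀ hi]
        · simp [hji, not_imp_comm.1 (h j) hji]
      exact hsingle ▸ W.smul_mem _ hx

lemma single_mem_of_comp_symm_mem [Semiring k] {σ : Perm ι} {W : Submodule k (ι → k)}
    (hW : ∀ x ∈ W, x ∘ σ.symm ∈ W) {i : ι} (hi : Pi.single i 1 ∈ W) (t : ℕ) :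
    Pi.single ((σ ^ t) i) 1 ∈ W := by
  induction t with
  | zero => simpa using hi
  | succ t ih =>
    have := hW _ ih
    rw [Pi.single_comp_equiv, Equiv.symm_symm] at this
    rwa [pow_succ', Perm.mul_apply]

lemma eq_top_of_forall_single_mem [Semiring k] [Finite ι] {W : Submodule k (ι → k)}
    (h : ∀ i, Pi.single i 1 ∈ W) : W = ⊤ := by
  rw [eq_top_iff, ← (Pi.basisFun k ι).span_eq, span_le]
  rintro _ ⟨i, rfl⟩
  simpa using h i

end Submodule

open Submodule

theorem stmt8_general (k : Type) [Field k] (n : ℕ) (hn : 2 ≤ n) (l : Fin n → k)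
    (hinj : Function.Injective l)
    (W₁ W₂ : Submodule k (Fin n → k)) (w : ℕ)
    (hα : ∀ x ∈ W₁, (LinearMap.id : (Fin n → k) →ₗ[k] (Fin n → k)) x ∈ W₂)
    (hβ : ∀ x ∈ W₁, kroneckerBeta k n l x ∈ W₂)
    (hγ : ∀ x ∈ W₁, kroneckerGamma k n x ∈ W₂)
    (hd1 : Module.finrank k W₁ = w) (hd2 : Module.finrank k W₂ = w) :
    (W₁ = ⊥ ∧ W₂ = ⊥) ∨ (W₁ = ⊤ ∧ W₂ = ⊤) := by
  obtain rfl : W₁ = W₂ := eq_of_le_of_finrank_eq (fun x hx => hα x hx) (hd1.trans hd2.symm)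
  rcases eq_or_ne W₁ ⊥ with hbot | hbot
  · exact .inl ⟨hbot, hbot⟩
  obtain ⟨x, hx, hx0⟩ := exists_mem_ne_zero_of_ne_bot hbot
  obtain ⟨i, hi⟩ := Function.ne_iff.1 hx0
  have hei : Pi.single i 1 ∈ W₁ := single_mem_of_mul_mem hinj hβ hx hi
  have htop : W₁ = ⊤ := eq_top_of_forall_single_mem fun j => by
    have hσ := support_finRotate_of_le (n := n) hn
    obtain ⟨t, rfl⟩ := (isCycle_finRotate_of_le hn).exists_pow_eq
      (Perm.mem_support.1 (hσ ▸ Finset.mem_univ i)) (Perm.mem_support.1 (hσ ▸ Finset.mem_univ j))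
    exact single_mem_of_comp_symm_mem hγ hei t
  exact .inr ⟨htop, htop⟩

theorem stmt8 (k : Type) [Field k] (n : ℕ) (hn : 2 ≤ n) (l : Fin n → k)
    (hne : ∀ i, l i ≠ 0) (hinj : Function.Injective l)
    (W₁ W₂ : Submodule k (Fin n → k)) (w : ℕ)
    (hα : ∀ x ∈ W₁, (LinearMap.id : (Fin n → k) →ₗ[k] (Fin n → k)) x ∈ W₂)
    (hβ : ∀ x ∈ W₁, kroneckerBeta k n l x ∈ W₂)
    (hγ : ∀ x ∈ W₁, kroneckerGamma k n x ∈ W₂)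
    (hd1 : Module.finrank k W₁ = w) (hd2 : Module.finrank k W₂ = w) :
    (W₁ = ⊥ ∧ W₂ = ⊥) ∨ (W₁ = ⊤ ∧ W₂ = ⊤) :=
  stmt8_general k n hn l hinj W₁ W₂ w hα hβ hγ hd1 hd2
end

section
/- Let k be a field, λ₁ ≠ λ₂ nonzero in k, and define the 3-Kronecker representation X' = (k², k²; α, β, γ) by α = id, β(e(i)) = λᵢe(i), γ(e(1)) = e(2), γ(e(2)) = 0. Then X' has a unique subrepresentation V with dimension vector (1,1), namely V₁ = V₂ = span(e(2)), and V is not isomorphic to Y = (k, k; 1, 0, 0). -/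
/- X' = (k², k²; id, diag(λ₁,λ₂), γ) with γ(e1)=e2, γ(e2)=0 has a unique
   subrepresentation V of dimension vector (1,1), namely V₁ = V₂ = span(e2),
   and V is not isomorphic to Y = (k,k;1,0,0). -/

def betaTwo (k : Type) [Field k] (l₁ l₂ : k) : (Fin 2 → k) →ₗ[k] (Fin 2 → k) where
  toFun v := ![l₁ * v 0, l₂ * v 1]
  map_add' u v := by funext i; fin_cases i <;> simp [mul_add]
  map_smul' c v := by funext i; fin_cases i <;> (simp; ring)

/-- γ with γ(e 0) = e 1, γ(e 1) = 0. -/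
def gammaNilp (k : Type) [Field k] : (Fin 2 → k) →ₗ[k] (Fin 2 → k) where
  toFun v := ![0, v 0]
  map_add' u v := by funext i; fin_cases i <;> simp
  map_smul' c v := by funext i; fin_cases i <;> simp

/-- The line spanned by the second basis vector e(2). -/
def lineE2 (k : Type) [Field k] : Submodule k (Fin 2 → k) :=
  Submodule.span k {Pi.single (1 : Fin 2) (1 : k)}

theorem stmt10 (k : Type) [Field k] (l₁ l₂ : k)
    (h1 : l₁ ≠ 0) (h2 : l₂ ≠ 0) (h12 : l₁ ≠ l₂) :
    -- uniqueness of the (1,1)-dimensional subrepresentation: it is (span e2, span e2)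
    (∀ W₁ W₂ : Submodule k (Fin 2 → k),
      (∀ x ∈ W₁, (LinearMap.id : (Fin 2 → k) →ₗ[k] (Fin 2 → k)) x ∈ W₂) →
      (∀ x ∈ W₁, betaTwo k l₁ l₂ x ∈ W₂) →
      (∀ x ∈ W₁, gammaNilp k x ∈ W₂) →
      Module.finrank k W₁ = 1 → Module.finrank k W₂ = 1 →
      W₁ = lineE2 k ∧ W₂ = lineE2 k) ∧
    -- V = (span e2, span e2) is not isomorphic to Y = (k,k;1,0,0):
    -- there is no pair (f₁,f₂) commuting with the structure maps whose restrictions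
    -- to V₁, V₂ are bijections onto k
    ¬ ∃ f₁ f₂ : (Fin 2 → k) →ₗ[k] k,
        (∀ x ∈ lineE2 k, f₂ x = f₁ x) ∧
        (∀ x ∈ lineE2 k, f₂ (betaTwo k l₁ l₂ x) = 0) ∧
        (∀ x ∈ lineE2 k, f₂ (gammaNilp k x) = 0) ∧
        Set.BijOn f₁ (lineE2 k : Set (Fin 2 → k)) Set.univ ∧
        Set.BijOn f₂ (lineE2 k : Set (Fin 2 → k)) Set.univ := by
  constructor
  · intro W₁ W₂ hid hβ hγ hW₁ hW₂
    have hle : W₁ ≤ W₂ := fun x hx => by simpa using hid x hx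
    have heq : W₁ = W₂ := Submodule.eq_of_le_of_finrank_eq hle (hW₁.trans hW₂.symm)
    -- find a nonzero vector in W₁
    obtain ⟨v, hvW, hv0⟩ : ∃ v ∈ W₁, v ≠ 0 := by
      by_contra h
      push_neg at h
      have : W₁ = ⊥ := by
        rw [Submodule.eq_bot_iff]; exact h
      rw [this] at hW₁; simp at hW₁
    have hspan : W₁ = Submodule.span k {v} := by
      refine (Submodule.eq_of_le_of_finrank_eq ?_ ?_).symm
      · rwa [Submodule.span_singleton_le_iff_mem]
      · rw [finrank_span_singleton hv0, hW₁]
    -- β v ∈ span v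
    have hβv : betaTwo k l₁ l₂ v ∈ Submodule.span k {v} := by
      rw [← hspan, heq]; exact hβ v hvW
    have hγv : gammaNilp k v ∈ Submodule.span k {v} := by
      rw [← hspan, heq]; exact hγ v hvW
    obtain ⟨c, hc⟩ := Submodule.mem_span_singleton.mp hβv
    obtain ⟨d, hd⟩ := Submodule.mem_span_singleton.mp hγv
    have hc0 : c * v 0 = l₁ * v 0 := by
      have := congrFun hc 0; simpa [betaTwo] using this
    have hc1 : c * v 1 = l₂ * v 1 := by
      have := congrFun hc 1; simpa [betaTwo] using this
    have hd0 : d * v 0 = 0 := by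
      have := congrFun hd 0; simpa [gammaNilp] using this
    have hd1 : d * v 1 = v 0 := by
      have := congrFun hd 1; simpa [gammaNilp] using this
    have hv00 : v 0 = 0 := by
      by_contra hne
      have hcl : c = l₁ := mul_right_cancel₀ hne hc0
      have hv1 : v 1 = 0 := by
        by_contra hv1ne
        have h' : l₁ * v 1 = l₂ * v 1 := by rw [← hcl]; exact hc1
        exact h12 (mul_right_cancel₀ hv1ne h')
      rw [hv1, mul_zero] at hd1
      exact hne hd1.symm
    have hv11 : v 1 ≠ 0 := by
      intro h
      apply hv0
      funext i; fin_cases i <;> simp [hv00, h]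
    have hveq : v = (v 1) • (Pi.single (1 : Fin 2) (1 : k) : Fin 2 → k) := by
      funext i; fin_cases i <;> simp [hv00]
    have : W₁ = lineE2 k := by
      rw [hspan, hveq, lineE2]
      exact Submodule.span_singleton_smul_eq (IsUnit.mk0 _ hv11) _
    exact ⟨this, heq ▸ this⟩
  · rintro ⟨f₁, f₂, h12', hβ0, hγ0, hb1, hb2⟩
    have he2 : Pi.single (1 : Fin 2) (1 : k) ∈ lineE2 k :=
      Submodule.mem_span_singleton_self _
    have hβe2 : betaTwo k l₁ l₂ (Pi.single (1 : Fin 2) (1 : k))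
        = l₂ • (Pi.single (1 : Fin 2) (1 : k) : Fin 2 → k) := by
      funext i; fin_cases i <;> simp [betaTwo]
    have h0 : f₂ (Pi.single (1 : Fin 2) (1 : k)) = 0 := by
      have h := hβ0 _ he2
      rw [hβe2, map_smul, smul_eq_mul, mul_eq_zero] at h
      exact h.resolve_left h2
    have h1' : f₁ (Pi.single (1 : Fin 2) (1 : k)) = 0 := by
      rw [← h12' _ he2, h0]
    obtain ⟨x, hx, hx1⟩ := hb1.2.2 (Set.mem_univ (1 : k))
    obtain ⟨c, rfl⟩ := Submodule.mem_span_singleton.mp hx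
    rw [map_smul, h1', smul_zero] at hx1
    exact zero_ne_one hx1
end
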